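/- arXiv:2109.11003 — 4 statements merged into one kernel-verified Lean document; each statement's English description precedes it below -/
import Mathlib

section
/- There exists a sequence Δ_1, Δ_2, ... ≥ 0 with ∑_{q=1}^∞ q Δ_q = ∞ such that the set A = {x ∈ [0,1] : |x - a/q| < Δ_q for infinitely many (a,q) ∈ ℤ × ℕ} has Lebesgue measure zero. -/
/-!
Let `N_j = (2^j)!`, let `j(q)` be the least `j` with `q ∣ N_j`, and put `Δ_q = c_{j(q)} / N_{j(q)}`
with `c_j = 1/(j+1)^2`. Every `a/q` with `j(q) = j` lies on the grid `N_j⁻¹ ℤ`, so the points of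
`[0,1]` approximated at level `j` lie in `N_j + 1` intervals of total length at most `4 c_j`; as
`∑ c_j < ∞`, Borel–Cantelli makes the limsup set null. On the other hand the `q = N_{j+1}/k`,
`1 ≤ k ≤ 2^j`, all have level `j+1` and contribute `c_{j+1} H(2^j) ≥ c_{j+1} (1 + j/2) = 1/(2(j+2))`
to `∑ q Δ_q`, which therefore diverges.
-/

open MeasureTheory Filter Function
open scoped Nat

theorem Summable.sum_finsets_of_pairwise_disjoint {f : ℕ → ℝ} (hf : ∀ q, 0 ≤ f q)
    (hsum : Summable f) {B : ℕ → Finset ℕ} (hB : Pairwise (Disjoint on B)) :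
    Summable fun j => ∑ q ∈ B j, f q := by
  classical
  refine summable_of_sum_range_le (c := ∑' q, f q) (fun j => Finset.sum_nonneg fun q _ => hf q)
    fun M => ?_
  rw [← Finset.sum_biUnion (hB.set_pairwise _)]
  exact hsum.sum_le_tsum _ fun q _ => hf q

theorem one_add_div_two_le_harmonic_two_pow (j : ℕ) : 1 + (j : ℚ) / 2 ≤ harmonic (2 ^ j) := by
  induction j with
  | zero => simp [harmonic]
  | succ j ih =>
    have hdyadic : (1 : ℚ) / 2 ≤ ∑ i ∈ Finset.range (2 ^ j), ((2 ^ j + i + 1 : ℕ) : ℚ)⁻¹ := by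
      calc (1 : ℚ) / 2 = (Finset.range (2 ^ j)).card • ((2 : ℚ) ^ (j + 1))⁻¹ := by
            rw [Finset.card_range, nsmul_eq_mul, pow_succ]; push_cast; field_simp
        _ ≤ _ := Finset.card_nsmul_le_sum _ _ _ fun i hi => by
            rw [Finset.mem_range] at hi
            gcongr
            rw [pow_succ]; push_cast; norm_cast; omega
    rw [pow_succ, mul_two, harmonic, Finset.sum_range_add, ← harmonic]
    push_cast at ih hdyadic ⊢
    linarith

namespace DuffinSchaeffer

def gridNbhd (N : ℕ) (r : ℝ) : Set ℝ :=
  ⋃ b ∈ Finset.Icc (0 : ℤ) N, Metric.ball ((b : ℝ) / N) r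

theorem volume_gridNbhd_le (N : ℕ) (r : ℝ) :
    volume (gridNbhd N r) ≤ ENNReal.ofReal ((N + 1) * (2 * r)) :=
  calc volume (gridNbhd N r)
      ≤ ∑ b ∈ Finset.Icc (0 : ℤ) N, volume (Metric.ball ((b : ℝ) / N) r) :=
        measure_biUnion_finset_le _ _
    _ = ENNReal.ofReal ((N + 1) * (2 * r)) := by
        rw [ENNReal.ofReal_mul (by positivity)]
        simp only [Real.volume_ball, Finset.sum_const, Int.card_Icc, sub_zero, nsmul_eq_mul]
        norm_cast

theorem mem_gridNbhd {N q : ℕ} {r x : ℝ} (a : ℤ) (hN : 0 < N) (hq : q ∣ N) (hr : r ≤ 1 / N)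
    (hx : x ∈ Set.Icc (0 : ℝ) 1) (h : |x - a / q| < r) : x ∈ gridNbhd N r := by
  obtain ⟨m, rfl⟩ := hq
  have hN' : (0 : ℝ) < q * m := by exact_mod_cast hN
  have hq : (q : ℝ) ≠ 0 := left_ne_zero_of_mul hN'.ne'
  have hm : (m : ℝ) ≠ 0 := right_ne_zero_of_mul hN'.ne'
  have hfrac : (a : ℝ) / q = ((a * m : ℤ) : ℝ) / ((q * m : ℕ) : ℝ) := by
    push_cast; field_simp
  rw [hfrac, abs_lt] at h
  refine Set.mem_iUnion₂.2 ⟨a * m, ?_, by rwa [Metric.mem_ball, Real.dist_eq, abs_lt]⟩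
  set n : ℝ := ((q * m : ℕ) : ℝ)
  have hn : 0 < n := by positivity
  have h₀ : ((-1 : ℤ) : ℝ) / n < ((a * m : ℤ) : ℝ) / n := by
    rw [Int.cast_neg, Int.cast_one, neg_div]
    linarith [hx.1]
  have h₁ : ((a * m : ℤ) : ℝ) / n < ((q * m + 1 : ℕ) : ℤ) / n := by
    rw [Int.cast_natCast, Nat.cast_add_one, add_div, div_self hn.ne']
    linarith [hx.2]
  rw [div_lt_div_iff_of_pos_right hn, Int.cast_lt] at h₀ h₁
  rw [Finset.mem_Icc]
  omega

theorem volume_approximable_eq_zero_of_dvd {N : ℕ → ℕ} {c : ℕ → ℝ} {level : ℕ → ℕ} {Δ : ℕ → ℝ}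
    (hN : ∀ j, 0 < N j) (hc₀ : ∀ j, 0 ≤ c j) (hc₁ : ∀ j, c j ≤ 1) (hc : Summable c)
    (hlevel : Tendsto level atTop atTop) (hdvd : ∀ q, 0 < q → q ∣ N (level q))
    (hΔ : ∀ q, Δ q ≤ c (level q) / N (level q)) :
    volume {x ∈ Set.Icc (0 : ℝ) 1 | ∀ Q : ℕ, ∃ (a : ℤ) (q : ℕ), Q < q ∧ |x - a / q| < Δ q} = 0 := by
  have hvol (j : ℕ) : volume (gridNbhd (N j) (c j / N j)) ≤ ENNReal.ofReal (4 * c j) := by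
    refine (volume_gridNbhd_le _ _).trans (ENNReal.ofReal_le_ofReal ?_)
    have : (1 : ℝ) ≤ N j := by exact_mod_cast hN j
    rw [mul_div_assoc', mul_div_assoc', div_le_iff₀ (by positivity)]
    nlinarith [hc₀ j]
  have hG : ∑' j, volume (gridNbhd (N j) (c j / N j)) ≠ ⊤ := by
    refine ne_top_of_le_ne_top ?_ (ENNReal.tsum_le_tsum hvol)
    rw [← ENNReal.ofReal_tsum_of_nonneg (fun j => by linarith [hc₀ j]) (hc.mul_left 4)]
    exact ENNReal.ofReal_ne_top
  refine measure_mono_null ?_ (measure_limsup_atTop_eq_zero hG)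
  rintro x ⟨hx, happrox⟩
  rw [mem_limsup_iff_frequently_mem, frequently_atTop]
  intro j₀
  obtain ⟨Q, hQ⟩ := eventually_atTop.1 (hlevel.eventually_ge_atTop j₀)
  obtain ⟨a, q, hQq, hq⟩ := happrox Q
  exact ⟨level q, hQ q hQq.le, mem_gridNbhd a (hN _) (hdvd q (by omega))
    (div_le_div_of_nonneg_right (hc₁ _) (Nat.cast_nonneg _)) hx (hq.trans_le (hΔ q))⟩

def scale (j : ℕ) : ℕ := (2 ^ j)!

noncomputable def level (q : ℕ) : ℕ := sInf {j | q ∣ scale j}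

noncomputable def weight (j : ℕ) : ℝ := 1 / ((j : ℝ) + 1) ^ 2

noncomputable def radius (q : ℕ) : ℝ := weight (level q) / scale (level q)

theorem scale_pos (j : ℕ) : 0 < scale j := Nat.factorial_pos _

theorem scale_dvd_scale {i j : ℕ} (h : i ≤ j) : scale i ∣ scale j :=
  Nat.factorial_dvd_factorial (Nat.pow_le_pow_right two_pos h)

theorem dvd_scale_of_le_two_pow {j k : ℕ} (hk : 0 < k) (hkj : k ≤ 2 ^ j) : k ∣ scale j :=
  Nat.dvd_factorial hk hkj

theorem dvd_scale_level {q : ℕ} (hq : 0 < q) : q ∣ scale (level q) :=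
  Nat.sInf_mem (s := {j | q ∣ scale j}) ⟨q, dvd_scale_of_le_two_pow hq Nat.lt_two_pow_self.le⟩

theorem level_le_of_dvd {q j : ℕ} (h : q ∣ scale j) : level q ≤ j := Nat.sInf_le h

theorem lt_level_of_scale_lt {q j : ℕ} (h : scale j < q) : j < level q := by
  by_contra! hle
  have hq : 0 < q := (scale_pos j).trans h
  exact h.not_ge (Nat.le_of_dvd (scale_pos j) ((dvd_scale_level hq).trans (scale_dvd_scale hle)))

theorem tendsto_level : Tendsto level atTop atTop :=
  tendsto_atTop_atTop.2 fun j => ⟨scale j + 1, fun _ hq => (lt_level_of_scale_lt hq).le⟩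

theorem weight_nonneg (j : ℕ) : 0 ≤ weight j := by
  unfold weight; positivity

theorem weight_le_one (j : ℕ) : weight j ≤ 1 := by
  rw [weight, div_le_one (by positivity)]
  nlinarith [(j.cast_nonneg : (0 : ℝ) ≤ j)]

theorem summable_weight : Summable weight := by
  refine ((summable_nat_add_iff 1).2 (Real.summable_one_div_nat_pow.2 one_lt_two)).congr fun j => ?_
  rw [weight, Nat.cast_add_one]

theorem radius_nonneg (q : ℕ) : 0 ≤ radius q :=
  div_nonneg (weight_nonneg _) (Nat.cast_nonneg _)

section Block

variable {j k : ℕ}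

theorem dvd_scale_succ (hk : 0 < k) (hkj : k ≤ 2 ^ j) : k ∣ scale (j + 1) :=
  dvd_scale_of_le_two_pow hk (hkj.trans (Nat.pow_le_pow_right two_pos j.le_succ))

theorem scale_lt_scale_succ_div (hk : 0 < k) (hkj : k ≤ 2 ^ j) : scale j < scale (j + 1) / k := by
  rw [Nat.lt_div_iff_mul_lt' (dvd_scale_succ hk hkj)]
  calc k * scale j ≤ 2 ^ j * scale j := Nat.mul_le_mul_right _ hkj
    _ < (2 ^ j + 1) * scale j := Nat.mul_lt_mul_of_pos_right (Nat.lt_succ_self _) (scale_pos j)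
    _ = (2 ^ j + 1)! := (Nat.factorial_succ _).symm
    _ ≤ scale (j + 1) := Nat.factorial_le (by rw [pow_succ]; linarith [Nat.one_le_two_pow (n := j)])

theorem level_scale_succ_div (hk : 0 < k) (hkj : k ≤ 2 ^ j) : level (scale (j + 1) / k) = j + 1 :=
  le_antisymm (level_le_of_dvd (Nat.div_dvd_of_dvd (dvd_scale_succ hk hkj)))
    (lt_level_of_scale_lt (scale_lt_scale_succ_div hk hkj))

theorem mul_radius_scale_succ_div (hk : 0 < k) (hkj : k ≤ 2 ^ j) :
    ((scale (j + 1) / k : ℕ) : ℝ) * radius (scale (j + 1) / k) = weight (j + 1) / k := by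
  have hk' : (k : ℝ) ≠ 0 := by positivity
  have hscale : (scale (j + 1) : ℝ) ≠ 0 := by exact_mod_cast (scale_pos _).ne'
  rw [radius, level_scale_succ_div hk hkj, Nat.cast_div (dvd_scale_succ hk hkj) hk']
  field_simp

end Block

def block (j : ℕ) : Finset ℕ := (Finset.Icc 1 (2 ^ j)).image (scale (j + 1) / ·)

theorem level_of_mem_block {j q : ℕ} (hq : q ∈ block j) : level q = j + 1 := by
  obtain ⟨k, hk, rfl⟩ := Finset.mem_image.1 hq
  rw [Finset.mem_Icc] at hk
  exact level_scale_succ_div hk.1 hk.2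

theorem pairwise_disjoint_block : Pairwise (Disjoint on block) := fun i j hij =>
  Finset.disjoint_left.2 fun _ hi hj => hij (by
    have := (level_of_mem_block hi).symm.trans (level_of_mem_block hj); omega)

theorem sum_mul_radius_block (j : ℕ) :
    ∑ q ∈ block j, (q : ℝ) * radius q = weight (j + 1) * harmonic (2 ^ j) := by
  have hinj : Set.InjOn (scale (j + 1) / ·) (Finset.Icc 1 (2 ^ j)) := fun k hk k' hk' h => by
    rw [Finset.coe_Icc, Set.mem_Icc] at hk hk'
    have hne := (scale_pos (j + 1)).ne'
    rw [← Nat.div_div_self (dvd_scale_succ hk.1 hk.2) hne,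
      ← Nat.div_div_self (dvd_scale_succ hk'.1 hk'.2) hne]
    exact congrArg _ h
  rw [block, Finset.sum_image hinj, harmonic_eq_sum_Icc, Rat.cast_sum, Finset.mul_sum]
  refine Finset.sum_congr rfl fun k hk => ?_
  rw [Finset.mem_Icc] at hk
  rw [mul_radius_scale_succ_div hk.1 hk.2, div_eq_mul_inv]
  push_cast
  rfl

theorem not_summable_mul_radius : ¬ Summable fun q : ℕ => (q : ℝ) * radius q := by
  intro hsum
  have hblocks := hsum.sum_finsets_of_pairwise_disjoint
    (fun q => mul_nonneg q.cast_nonneg (radius_nonneg q)) pairwise_disjoint_block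
  refine Real.not_summable_one_div_natCast ((summable_nat_add_iff 2).1 ?_)
  refine (hblocks.mul_left 2).of_nonneg_of_le (fun j => by positivity) fun j => ?_
  have hharm : 1 + (j : ℝ) / 2 ≤ harmonic (2 ^ j) := by
    simpa using (Rat.cast_le (K := ℝ)).2 (one_add_div_two_le_harmonic_two_pow j)
  rw [sum_mul_radius_block]
  calc 1 / ((j + 2 : ℕ) : ℝ) = 2 * (weight (j + 1) * (1 + (j : ℝ) / 2)) := by
        rw [weight]; push_cast; field_simp; ring
    _ ≤ 2 * (weight (j + 1) * harmonic (2 ^ j)) := by gcongr; exact weight_nonneg _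

end DuffinSchaeffer

open DuffinSchaeffer in
theorem duffin_schaeffer_counterexample :
    ∃ Δ : ℕ → ℝ, (∀ q, 0 ≤ Δ q) ∧ ¬ Summable (fun q : ℕ => (q : ℝ) * Δ q) ∧
      volume {x ∈ Set.Icc (0 : ℝ) 1 |
        ∀ Q : ℕ, ∃ (a : ℤ) (q : ℕ), Q < q ∧ |x - a / q| < Δ q} = 0 :=
  ⟨radius, radius_nonneg, not_summable_mul_radius,
    volume_approximable_eq_zero_of_dvd scale_pos weight_nonneg weight_le_one summable_weight
      tendsto_level (fun _ => dvd_scale_level) fun _ => le_rfl⟩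
end

section
/- Fix C ≥ 1 and let (a_p) be a sequence indexed by primes with values in [0, C]. Then there is a constant K depending only on C such that ∑_{n ≤ x} ∏_{p | n} a_p ≤ K · x · exp(∑_{p ≤ x} (a_p − 1)/p) for all x ≥ 1. -/
/-!
Write `f n = ∏_{p ∣ n} a_p`. Since `log n = ∑_{d ∣ n} Λ d` and `f (d m) ≤ C f m` for a prime power
`d`, Chebyshev's bound `ψ y ≪ y` gives `∑_{n ≤ x} f n log n ≪ C x ∑_{n ≤ x} f n / n`, and hence
`(∑_{n ≤ x} f n) log x ≪ C x ∑_{n ≤ x} f n / n`. The last sum is at most the Euler product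
`∏_{p ≤ x} (1 + a_p / (p - 1)) ≤ exp (4 C + ∑_{p ≤ x} a_p / p)`, and Mertens' estimate
`∑_{p ≤ x} 1 / p ≤ log log x + O(1)` turns `exp (∑_{p ≤ x} a_p / p)` into
`exp (∑_{p ≤ x} (a_p - 1) / p) · O(log x)`; the factor `log x` cancels.
-/

open Nat hiding log
open Finset Real Chebyshev
open ArithmeticFunction hiding log

namespace SieveUpperBound

theorem sum_Ioc_log_eq_sum_vonMangoldt_mul_div (N : ℕ) :
    ∑ n ∈ Ioc 0 N, Real.log n = ∑ d ∈ Ioc 0 N, Λ d * (N / d : ℕ) := by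
  rw [← sum_Ioc_mul_zeta_eq_sum, vonMangoldt_mul_zeta]
  simp [ArithmeticFunction.log_apply]

/-- Mertens' first estimate, from `∑_{p ≤ N} log p ⌊N / p⌋ ≤ ∑_{n ≤ N} log n ≤ N log N`
and `θ N ≤ N log 4`. -/
theorem sum_primesLE_log_div_le (N : ℕ) (hN : 1 ≤ N) :
    ∑ p ∈ primesLE N, Real.log p / p ≤ Real.log N + Real.log 4 := by
  have hN' : (0 : ℝ) < N := by exact_mod_cast hN
  have hfloor : ∑ p ∈ primesLE N, (N / p - 1 : ℝ) * Real.log p ≤ N * Real.log N :=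
    calc ∑ p ∈ primesLE N, (N / p - 1 : ℝ) * Real.log p
        ≤ ∑ p ∈ primesLE N, Λ p * (N / p : ℕ) := by
          refine sum_le_sum fun p hp ↦ ?_
          have hp := prime_of_mem_primesLE hp
          rw [vonMangoldt_apply_prime hp, mul_comm (Real.log p)]
          refine mul_le_mul_of_nonneg_right ?_ (Real.log_nonneg (mod_cast hp.one_le))
          rw [← Nat.floor_div_eq_div (K := ℝ)]
          exact (Nat.sub_one_lt_floor _).le
      _ ≤ ∑ d ∈ Ioc 0 N, Λ d * (N / d : ℕ) := by
          rw [primesLE_eq_filter_Ioc_zero]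
          exact sum_le_sum_of_subset_of_nonneg (filter_subset _ _)
            fun d _ _ ↦ mul_nonneg vonMangoldt_nonneg (Nat.cast_nonneg _)
      _ = ∑ n ∈ Ioc 0 N, Real.log n := (sum_Ioc_log_eq_sum_vonMangoldt_mul_div N).symm
      _ ≤ ∑ n ∈ Ioc 0 N, Real.log N := by
          gcongr with n hn
          · exact_mod_cast (mem_Ioc.mp hn).1
          · exact_mod_cast (mem_Ioc.mp hn).2
      _ = N * Real.log N := by simp
  have htheta : ∑ p ∈ primesLE N, Real.log p ≤ Real.log 4 * N := by
    rw [← theta_eq_sum_primesLE_log]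
    exact theta_le_log4_mul_x (Nat.cast_nonneg N)
  have hsplit : ∑ p ∈ primesLE N, (N / p - 1 : ℝ) * Real.log p =
      N * ∑ p ∈ primesLE N, Real.log p / p - ∑ p ∈ primesLE N, Real.log p := by
    rw [mul_sum, ← sum_sub_distrib]
    refine sum_congr rfl fun p _ ↦ ?_
    ring
  rw [← mul_le_mul_iff_right₀ hN']
  nlinarith

noncomputable def abelRemainder (N : ℕ) : ℝ :=
  ∑ p ∈ primesLE N, Real.log p / p * ((Real.log p)⁻¹ - (Real.log N)⁻¹)

theorem sum_primesLE_inv_eq (N : ℕ) :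
    ∑ p ∈ primesLE N, (p : ℝ)⁻¹ =
      abelRemainder N + (∑ p ∈ primesLE N, Real.log p / p) / Real.log N := by
  rw [abelRemainder, sum_div, ← sum_add_distrib]
  refine sum_congr rfl fun p hp ↦ ?_
  have : Real.log p ≠ 0 := (Real.log_pos (mod_cast one_lt_of_mem_primesLE hp)).ne'
  field_simp
  ring

theorem abelRemainder_succ (N : ℕ) :
    abelRemainder (N + 1) = abelRemainder N +
      (∑ p ∈ primesLE N, Real.log p / p) * ((Real.log N)⁻¹ - (Real.log (N + 1 : ℕ))⁻¹) := by
  have hnew : abelRemainder (N + 1) =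
      ∑ p ∈ primesLE N, Real.log p / p * ((Real.log p)⁻¹ - (Real.log (N + 1 : ℕ))⁻¹) := by
    rw [abelRemainder, primesLE_succ]
    split_ifs
    · rw [sum_insert (notMem_primesLE N), sub_self, mul_zero, zero_add]
    · rfl
  rw [hnew, abelRemainder, sum_mul, ← sum_add_distrib]
  refine sum_congr rfl fun p _ ↦ ?_
  ring

theorem abelRemainder_succ_le (N : ℕ) (hN : 2 ≤ N) :
    abelRemainder (N + 1) - Real.log (Real.log (N + 1 : ℕ)) + Real.log 4 / Real.log (N + 1 : ℕ) ≤
      abelRemainder N - Real.log (Real.log N) + Real.log 4 / Real.log N := by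
  have hlogN : 0 < Real.log N := Real.log_pos (by exact_mod_cast hN)
  have hlogN_le : Real.log N ≤ Real.log (N + 1 : ℕ) := Real.log_le_log (by positivity) (by simp)
  have hd : 0 ≤ (Real.log N)⁻¹ - (Real.log (N + 1 : ℕ))⁻¹ :=
    sub_nonneg.mpr (inv_anti₀ hlogN hlogN_le)
  -- `1 - 1/t ≤ log t` at `t = log (N + 1) / log N`
  have hloglog : Real.log N * ((Real.log N)⁻¹ - (Real.log (N + 1 : ℕ))⁻¹) ≤
      Real.log (Real.log (N + 1 : ℕ)) - Real.log (Real.log N) := by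
    have := Real.one_sub_inv_le_log_of_pos (div_pos (hlogN.trans_le hlogN_le) hlogN)
    rw [Real.log_div (hlogN.trans_le hlogN_le).ne' hlogN.ne', inv_div] at this
    convert this using 1
    field_simp
  have hM := mul_le_mul_of_nonneg_right (sum_primesLE_log_div_le N (by omega)) hd
  rw [abelRemainder_succ, div_eq_mul_inv, div_eq_mul_inv]
  nlinarith

/-- Mertens' second estimate, by partial summation against `1 / log`: the quantity
`abelRemainder N - log log N + log 4 / log N` is antitone. -/
theorem exists_sum_primesLE_inv_le_log_log_add :
    ∃ c : ℝ, ∀ N : ℕ, 2 ≤ N → ∑ p ∈ primesLE N, (p : ℝ)⁻¹ ≤ Real.log (Real.log N) + c := by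
  let Φ : ℕ → ℝ := fun N ↦ abelRemainder N - Real.log (Real.log N) + Real.log 4 / Real.log N
  have hΦ : ∀ N, 2 ≤ N → Φ N ≤ Φ 2 := by
    intro N hN
    induction N, hN using Nat.le_induction with
    | base => rfl
    | succ N hN ih => exact (abelRemainder_succ_le N hN).trans ih
  refine ⟨Φ 2 + 1, fun N hN ↦ ?_⟩
  have hlogN : 0 < Real.log N := Real.log_pos (by exact_mod_cast hN)
  have hM : (∑ p ∈ primesLE N, Real.log p / p - Real.log 4) / Real.log N ≤ 1 :=
    (div_le_one hlogN).mpr (by linarith [sum_primesLE_log_div_le N (by omega)])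
  have := hΦ N hN
  rw [sub_div] at hM
  rw [sum_primesLE_inv_eq]
  simp only [Φ] at this ⊢
  linarith

theorem div_sub_one_le_div_add {t M y : ℝ} (ht : 0 ≤ t) (htM : t ≤ M) (hy : 2 ≤ y) :
    t / (y - 1) ≤ t / y + 2 * M / y ^ 2 := by
  have hy1 : 0 < y - 1 := by linarith
  rw [div_add_div _ _ (by positivity) (by positivity), div_le_div_iff₀ hy1 (by positivity)]
  nlinarith [mul_le_mul_of_nonneg_right htM (sq_nonneg y),
    mul_nonneg (ht.trans htM) (mul_nonneg (by linarith : 0 ≤ y) (by linarith : 0 ≤ y - 2))]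

theorem sum_mul_log_le {f : ℕ → ℝ} (hf : ∀ n, 0 ≤ f n) (x : ℕ) :
    (∑ n ∈ Ioc 0 x, f n) * Real.log x ≤
      ∑ n ∈ Ioc 0 x, f n * Real.log n + x * ∑ n ∈ Ioc 0 x, f n / n := by
  rw [sum_mul, mul_sum, ← sum_add_distrib]
  refine sum_le_sum fun n hn ↦ ?_
  have hn0 : (0 : ℝ) < n := mod_cast (mem_Ioc.mp hn).1
  have hx0 : (0 : ℝ) < x := hn0.trans_le (mod_cast (mem_Ioc.mp hn).2)
  have hlog : Real.log x ≤ Real.log n + x / n := by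
    have := Real.log_le_sub_one_of_pos (div_pos hx0 hn0)
    rw [Real.log_div hx0.ne' hn0.ne'] at this
    linarith
  calc f n * Real.log x ≤ f n * (Real.log n + x / n) := mul_le_mul_of_nonneg_left hlog (hf n)
    _ = f n * Real.log n + x * (f n / n) := by ring

variable {a : ℕ → ℝ} {C : ℝ}

theorem prodPrimeFactors_nonneg (ha : ∀ p, p.Prime → 0 ≤ a p) (n : ℕ) :
    0 ≤ prodPrimeFactors a n := by
  rcases eq_or_ne n 0 with rfl | hn
  · simp
  · rw [prodPrimeFactors_apply hn]
    exact prod_nonneg fun p hp ↦ ha p (prime_of_mem_primeFactors hp)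

theorem hasSum_prodPrimeFactors_prime_pow_div {p : ℕ} (hp : p.Prime) :
    HasSum (fun k ↦ prodPrimeFactors a (p ^ k) / (p ^ k : ℕ)) (1 + a p / (p - 1)) := by
  have hp1 : (1 : ℝ) < p := mod_cast hp.one_lt
  have hterm (k : ℕ) : prodPrimeFactors a (p ^ (k + 1)) / (p ^ (k + 1) : ℕ) =
      a p / p * (p : ℝ)⁻¹ ^ k := by
    rw [prodPrimeFactors_apply (pow_ne_zero _ hp.ne_zero),
      primeFactors_prime_pow k.succ_ne_zero hp, prod_singleton, inv_pow]
    push_cast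
    field_simp
    ring
  have htail : HasSum (fun k ↦ a p / p * (p : ℝ)⁻¹ ^ k) (a p / (p - 1)) := by
    have hsum : a p / p * (1 - (p : ℝ)⁻¹)⁻¹ = a p / (p - 1) := by field_simp
    rw [← hsum]
    exact (hasSum_geometric_of_lt_one (by positivity) (inv_lt_one_of_one_lt₀ hp1)).mul_left _
  simpa using HasSum.zero_add (f := fun k ↦ prodPrimeFactors a (p ^ k) / (p ^ k : ℕ))
    (by simpa only [hterm] using htail)

theorem sum_Ioc_prodPrimeFactors_div_le_prod (ha : ∀ p, p.Prime → 0 ≤ a p) (x : ℕ) :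
    ∑ n ∈ Ioc 0 x, prodPrimeFactors a n / n ≤ ∏ p ∈ primesLE x, (1 + a p / (p - 1)) := by
  set g : ℕ → ℝ := fun n ↦ prodPrimeFactors a n / n
  have hg_nonneg (n : ℕ) : 0 ≤ g n := div_nonneg (prodPrimeFactors_nonneg ha n) n.cast_nonneg
  have hg_one : g 1 = 1 := by simp [g]
  have hg_mul {m n : ℕ} (h : m.Coprime n) : g (m * n) = g m * g n := by
    simp only [g, (IsMultiplicative.prodPrimeFactors a).map_mul_of_coprime h, Nat.cast_mul,
      mul_div_mul_comm]
  have hg_sum {p : ℕ} (hp : p.Prime) : Summable fun k ↦ ‖g (p ^ k)‖ := by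
    simp only [Real.norm_of_nonneg (hg_nonneg _)]
    exact (hasSum_prodPrimeFactors_prime_pow_div hp).summable
  have heuler := (EulerProduct.summable_and_hasSum_smoothNumbers_prod_primesBelow_tsum
    hg_one hg_mul hg_sum (x + 1)).2
  rw [← Function.comp_def g, hasSum_subtype_iff_indicator] at heuler
  have hfactor :
      ∏ p ∈ (x + 1).primesBelow, ∑' k, g (p ^ k) = ∏ p ∈ primesLE x, (1 + a p / (p - 1)) :=
    prod_congr rfl fun p hp ↦ (hasSum_prodPrimeFactors_prime_pow_div
      (prime_of_mem_primesBelow hp)).tsum_eq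
  rw [hfactor] at heuler
  calc ∑ n ∈ Ioc 0 x, g n = ∑ n ∈ Ioc 0 x, (x + 1).smoothNumbers.indicator g n :=
        sum_congr rfl fun n hn ↦ (Set.indicator_of_mem (mem_smoothNumbers_of_lt
          (mem_Ioc.mp hn).1 (Nat.lt_succ_of_le (mem_Ioc.mp hn).2)) g).symm
    _ ≤ _ := sum_le_hasSum _ (fun n _ ↦ Set.indicator_nonneg (fun n _ ↦ hg_nonneg n) n) heuler

theorem prod_primesLE_one_add_div_sub_one_le (ha : ∀ p, p.Prime → a p ∈ Set.Icc 0 C)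
    (x : ℕ) :
    ∏ p ∈ primesLE x, (1 + a p / (p - 1)) ≤ Real.exp (4 * C + ∑ p ∈ primesLE x, a p / p) := by
  have hC : 0 ≤ C := (ha 2 prime_two).1.trans (ha 2 prime_two).2
  have hsq : ∑ p ∈ primesLE x, ((p : ℝ) ^ 2)⁻¹ ≤ 2 := by
    calc ∑ p ∈ primesLE x, ((p : ℝ) ^ 2)⁻¹ ≤ ∑ i ∈ Ioo 0 (x + 1), ((i : ℝ) ^ 2)⁻¹ := by
          refine sum_le_sum_of_subset_of_nonneg (fun p hp ↦ ?_) fun _ _ _ ↦ by positivity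
          have := mem_primesLE.mp hp
          exact mem_Ioo.mpr ⟨this.2.pos, Nat.lt_succ_of_le this.1⟩
      _ ≤ 2 / ((0 : ℕ) + 1) := sum_Ioo_inv_sq_le 0 (x + 1)
      _ = 2 := by norm_num
  have hlin : ∑ p ∈ primesLE x, a p / (p - 1) ≤ 4 * C + ∑ p ∈ primesLE x, a p / p :=
    calc ∑ p ∈ primesLE x, a p / (p - 1)
        ≤ ∑ p ∈ primesLE x, (a p / p + 2 * C * ((p : ℝ) ^ 2)⁻¹) := by
          refine sum_le_sum fun p hp ↦ ?_
          have hp := prime_of_mem_primesLE hp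
          rw [← div_eq_mul_inv]
          exact div_sub_one_le_div_add (ha p hp).1 (ha p hp).2 (mod_cast hp.two_le)
      _ ≤ 4 * C + ∑ p ∈ primesLE x, a p / p := by
          rw [sum_add_distrib, ← mul_sum]
          nlinarith
  calc ∏ p ∈ primesLE x, (1 + a p / (p - 1))
      ≤ ∏ p ∈ primesLE x, Real.exp (a p / (p - 1)) := by
        refine prod_le_prod (fun p hp ↦ ?_) fun p _ ↦ by
          linarith [Real.add_one_le_exp (a p / (p - 1))]
        have hp := prime_of_mem_primesLE hp
        have : (1 : ℝ) < p := mod_cast hp.one_lt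
        linarith [div_nonneg (ha p hp).1 (by linarith : (0 : ℝ) ≤ p - 1)]
    _ = Real.exp (∑ p ∈ primesLE x, a p / (p - 1)) := (Real.exp_sum _ _).symm
    _ ≤ _ := Real.exp_le_exp.mpr hlin

theorem prodPrimeFactors_primePow_mul_le (hC : 1 ≤ C) (ha : ∀ p, p.Prime → a p ∈ Set.Icc 0 C)
    {q m : ℕ} (hq : IsPrimePow q) (hm : m ≠ 0) :
    prodPrimeFactors a (q * m) ≤ C * prodPrimeFactors a m := by
  obtain ⟨p, k, hp, hk, rfl⟩ := hq
  rw [← Nat.prime_iff] at hp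
  have hpk : p ^ k ≠ 0 := pow_ne_zero _ hp.ne_zero
  rw [prodPrimeFactors_apply (mul_ne_zero hpk hm), prodPrimeFactors_apply hm,
    primeFactors_mul hpk hm, primeFactors_prime_pow hk.ne' hp, singleton_union]
  have hprod : 0 ≤ ∏ r ∈ m.primeFactors, a r :=
    prod_nonneg fun r hr ↦ (ha r (prime_of_mem_primeFactors hr)).1
  by_cases hpm : p ∈ m.primeFactors
  · rw [insert_eq_of_mem hpm]
    exact le_mul_of_one_le_left hprod hC
  · rw [prod_insert hpm]
    exact mul_le_mul_of_nonneg_right (ha p hp).2 hprod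

theorem prodPrimeFactors_mul_log_le (hC : 1 ≤ C) (ha : ∀ p, p.Prime → a p ∈ Set.Icc 0 C)
    (n : ℕ) : prodPrimeFactors a n * Real.log n ≤ C * (Λ * prodPrimeFactors a) n := by
  rw [mul_comm, ← vonMangoldt_sum, sum_mul,
    ← Nat.sum_divisorsAntidiagonal (fun d _ ↦ Λ d * prodPrimeFactors a n), mul_apply, mul_sum]
  refine sum_le_sum fun dm hdm ↦ ?_
  obtain ⟨hdm, hn⟩ := Nat.mem_divisorsAntidiagonal.mp hdm
  rw [← hdm]
  rcases eq_or_ne (Λ dm.1) 0 with h | h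
  · simp [h]
  · have := prodPrimeFactors_primePow_mul_le hC ha (vonMangoldt_ne_zero_iff.mp h)
      (right_ne_zero_of_mul (hdm ▸ hn))
    nlinarith [vonMangoldt_nonneg (n := dm.1)]

theorem sum_Ioc_prodPrimeFactors_mul_log_le (hC : 1 ≤ C)
    (ha : ∀ p, p.Prime → a p ∈ Set.Icc 0 C) (x : ℕ) :
    ∑ n ∈ Ioc 0 x, prodPrimeFactors a n * Real.log n ≤
      C * (Real.log 4 + 4) * x * ∑ n ∈ Ioc 0 x, prodPrimeFactors a n / n := by
  have hf := prodPrimeFactors_nonneg fun p hp ↦ (ha p hp).1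
  calc ∑ n ∈ Ioc 0 x, prodPrimeFactors a n * Real.log n
      ≤ C * ∑ n ∈ Ioc 0 x, (prodPrimeFactors a * Λ) n := by
        rw [mul_sum, mul_comm (prodPrimeFactors a)]
        exact sum_le_sum fun n _ ↦ prodPrimeFactors_mul_log_le hC ha n
    _ = C * ∑ m ∈ Ioc 0 x, prodPrimeFactors a m * ψ (x / m : ℕ) := by
        rw [sum_Ioc_mul_eq_sum_sum]
        simp only [psi, Nat.floor_natCast]
    _ ≤ C * ∑ m ∈ Ioc 0 x, prodPrimeFactors a m * ((Real.log 4 + 4) * x / m) := by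
        refine mul_le_mul_of_nonneg_left
          (sum_le_sum fun m hm ↦ mul_le_mul_of_nonneg_left ?_ (hf m)) (by linarith)
        calc ψ (x / m : ℕ) ≤ (Real.log 4 + 4) * (x / m : ℕ) := psi_le_const_mul_self (by positivity)
          _ ≤ (Real.log 4 + 4) * x / m := by
            rw [mul_div_assoc]
            gcongr
            exact Nat.cast_div_le
    _ = C * (Real.log 4 + 4) * x * ∑ n ∈ Ioc 0 x, prodPrimeFactors a n / n := by
        rw [mul_sum, mul_sum]
        exact sum_congr rfl fun m _ ↦ by ring

end SieveUpperBound

open SieveUpperBound in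
theorem sieve_upper_bound (C : ℝ) (hC : 1 ≤ C) (a : ℕ → ℝ)
    (ha : ∀ p : ℕ, p.Prime → a p ∈ Set.Icc 0 C) :
    ∃ K : ℝ, 0 < K ∧ ∀ x : ℕ, 1 ≤ x →
      ∑ n ∈ Icc 1 x, ∏ p ∈ n.primeFactors, a p ≤
        K * x * Real.exp (∑ p ∈ (Icc 1 x).filter Nat.Prime, (a p - 1) / p) := by
  obtain ⟨c, hc⟩ := exists_sum_primesLE_inv_le_log_log_add
  set A := C * (Real.log 4 + 4) + 1
  have hA : 1 ≤ A := by nlinarith [Real.log_nonneg (by norm_num : (1 : ℝ) ≤ 4)]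
  refine ⟨A * Real.exp (4 * C + max c 0), by positivity, fun x hx ↦ ?_⟩
  have hf := prodPrimeFactors_nonneg fun p hp ↦ (ha p hp).1
  have hS : ∑ n ∈ Icc 1 x, ∏ p ∈ n.primeFactors, a p = ∑ n ∈ Ioc 0 x, prodPrimeFactors a n :=
    sum_congr (Icc_add_one_left_eq_Ioc 0 x) fun n hn ↦
      (prodPrimeFactors_apply (Nat.pos_iff_ne_zero.mp (mem_Icc.mp hn).1)).symm
  rw [hS, ← primesLE_eq_filter_Icc_one]
  obtain rfl | hx2 := hx.eq_or_lt
  · simpa using one_le_mul_of_one_le_of_one_le hA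
      (Real.one_le_exp (by linarith [le_max_right c 0]))
  have hlog : 0 < Real.log x := Real.log_pos (mod_cast hx2)
  set T := ∑ n ∈ Ioc 0 x, prodPrimeFactors a n / n
  have hstepA : (∑ n ∈ Ioc 0 x, prodPrimeFactors a n) * Real.log x ≤ A * x * T := by
    linarith [sum_mul_log_le hf x, sum_Ioc_prodPrimeFactors_mul_log_le hC ha x]
  have hsplit : ∑ p ∈ primesLE x, a p / p =
      ∑ p ∈ primesLE x, (a p - 1) / p + ∑ p ∈ primesLE x, (p : ℝ)⁻¹ := by
    rw [← sum_add_distrib]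
    exact sum_congr rfl fun p _ ↦ by ring
  have hstepB : T ≤ Real.exp (4 * C + max c 0) *
      Real.exp (∑ p ∈ primesLE x, (a p - 1) / p) * Real.log x := by
    refine ((sum_Ioc_prodPrimeFactors_div_le_prod (fun p hp ↦ (ha p hp).1) x).trans
      (prod_primesLE_one_add_div_sub_one_le ha x)).trans ?_
    rw [← Real.exp_log hlog, ← Real.exp_add, ← Real.exp_add, Real.exp_le_exp, hsplit]
    linarith [hc x hx2, le_max_left c 0]
  refine le_of_mul_le_mul_right (hstepA.trans ?_) hlog
  calc A * x * T ≤ A * x * (Real.exp (4 * C + max c 0) *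
        Real.exp (∑ p ∈ primesLE x, (a p - 1) / p) * Real.log x) := by gcongr
    _ = _ := by ring
end

section
/- For all α, β ∈ [0,1]: (αβ)^{9/10} + ((1−α)(1−β))^{9/10} + (2/5)·(α(1−β) + (1−α)β) ≤ 1. -/
theorem quality_increment_inequality (α β : ℝ) (hα : α ∈ Set.Icc (0:ℝ) 1)
    (hβ : β ∈ Set.Icc (0:ℝ) 1) :
    (α * β) ^ ((9:ℝ)/10) + ((1 - α) * (1 - β)) ^ ((9:ℝ)/10) +
      (2/5) * (α * (1 - β) + (1 - α) * β) ≤ 1 := by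
  obtain ⟨hα0, hα1⟩ := hα
  obtain ⟨hβ0, hβ1⟩ := hβ
  set a : ℝ := α * β with ha_def
  set b : ℝ := (1 - α) * (1 - β) with hb_def
  have ha0 : 0 ≤ a := mul_nonneg hα0 hβ0
  have hb0 : 0 ≤ b := mul_nonneg (by linarith) (by linarith)
  set u : ℝ := max a b with hu_def
  have hu0 : 0 ≤ u := le_trans ha0 (le_max_left _ _)
  have hu1 : u ≤ 1 := max_le (by nlinarith) (by nlinarith)
  -- split exponents
  have hsplit : ∀ x : ℝ, 0 ≤ x →
      x ^ ((9:ℝ)/10) = x ^ ((2:ℝ)/5) * x ^ ((1:ℝ)/2) := by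
    intro x hx
    rw [← Real.rpow_add' hx (by norm_num)]
    norm_num
  have hupow0 : 0 ≤ u ^ ((2:ℝ)/5) := Real.rpow_nonneg hu0 _
  have hboundA : a ^ ((9:ℝ)/10) ≤ u ^ ((2:ℝ)/5) * a ^ ((1:ℝ)/2) := by
    rw [hsplit a ha0]
    exact mul_le_mul_of_nonneg_right
      (Real.rpow_le_rpow ha0 (le_max_left _ _) (by norm_num))
      (Real.rpow_nonneg ha0 _)
  have hboundB : b ^ ((9:ℝ)/10) ≤ u ^ ((2:ℝ)/5) * b ^ ((1:ℝ)/2) := by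
    rw [hsplit b hb0]
    exact mul_le_mul_of_nonneg_right
      (Real.rpow_le_rpow hb0 (le_max_right _ _) (by norm_num))
      (Real.rpow_nonneg hb0 _)
  -- sqrt bound : a^(1/2) + b^(1/2) ≤ 1
  have hsqrt : a ^ ((1:ℝ)/2) + b ^ ((1:ℝ)/2) ≤ 1 := by
    rw [show a ^ ((1:ℝ)/2) = Real.sqrt a from (Real.sqrt_eq_rpow a).symm,
      show b ^ ((1:ℝ)/2) = Real.sqrt b from (Real.sqrt_eq_rpow b).symm]
    have hA : Real.sqrt a ≤ (α + β) / 2 := by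
      rw [show (α + β)/2 = Real.sqrt (((α + β)/2)^2) from
        (Real.sqrt_sq (by linarith)).symm]
      exact Real.sqrt_le_sqrt (by nlinarith [sq_nonneg (α - β)])
    have hB : Real.sqrt b ≤ (2 - α - β) / 2 := by
      rw [show (2 - α - β)/2 = Real.sqrt (((2 - α - β)/2)^2) from
        (Real.sqrt_sq (by linarith)).symm]
      exact Real.sqrt_le_sqrt (by nlinarith [sq_nonneg (α - β)])
    linarith
  -- cross term
  have hcross : α * (1 - β) + (1 - α) * β ≤ 1 - u := by
    have : u ≤ a + b := max_le (by linarith) (by linarith)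
    nlinarith
  -- Bernoulli-type: u^(2/5) ≤ 3/5 + (2/5) u
  have hbern : u ^ ((2:ℝ)/5) ≤ 3/5 + (2/5) * u := by
    set v : ℝ := u ^ ((1:ℝ)/5) with hv_def
    have hv0 : 0 ≤ v := Real.rpow_nonneg hu0 _
    have h2 : u ^ ((2:ℝ)/5) = v ^ 2 := by
      rw [hv_def, ← Real.rpow_natCast (u ^ ((1:ℝ)/5)) 2, ← Real.rpow_mul hu0]
      norm_num
    have h5 : u = v ^ 5 := by
      rw [hv_def, ← Real.rpow_natCast (u ^ ((1:ℝ)/5)) 5, ← Real.rpow_mul hu0]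
      norm_num
    rw [h2, h5]
    nlinarith [sq_nonneg (v - 1), mul_nonneg (sq_nonneg (v - 1)) hv0,
      mul_nonneg (mul_nonneg (sq_nonneg (v - 1)) hv0) hv0,
      mul_nonneg (mul_nonneg (mul_nonneg (sq_nonneg (v - 1)) hv0) hv0) hv0]
  have hmain : a ^ ((9:ℝ)/10) + b ^ ((9:ℝ)/10) ≤ u ^ ((2:ℝ)/5) := by
    calc a ^ ((9:ℝ)/10) + b ^ ((9:ℝ)/10)
        ≤ u ^ ((2:ℝ)/5) * (a ^ ((1:ℝ)/2) + b ^ ((1:ℝ)/2)) := by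
          rw [mul_add]; exact add_le_add hboundA hboundB
      _ ≤ u ^ ((2:ℝ)/5) * 1 := mul_le_mul_of_nonneg_left hsqrt hupow0
      _ = u ^ ((2:ℝ)/5) := mul_one _
  nlinarith [hmain, hcross, hbern]
end

section
/- Let p > 5^{100} be a prime and A, B ∈ [0, 5^{12}]. Then (1 − A/p)^{9/10} (1 − B/p)^{9/10} (1 − 1/p)^{1/5} + (AB)^{9/10}/p^{9/5} + ((1 − A/p)^{9/10} B^{9/10} + A^{9/10} (1 − B/p)^{9/10})/p ≤ (1 − p^{−3/2})^{−1}. -/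
/-- Weighted AM-GM with second term 1: `s ^ w ≤ w * s + (1 - w)`. -/
lemma pow_rpow_five (a : ℕ) (r : ℝ) : ((5:ℝ) ^ a) ^ r = (5:ℝ) ^ ((a:ℝ) * r) := by
  rw [← Real.rpow_natCast 5 a, ← Real.rpow_mul (by norm_num)]

lemma five_rpow_eq (n : ℕ) (r : ℝ) (h : r = n) : (5:ℝ) ^ r = (5:ℝ) ^ n := by
  rw [h, Real.rpow_natCast]

lemma rpow_le_weighted_lin (s w : ℝ) (hs : 0 ≤ s) (hw0 : 0 ≤ w) (hw1 : w ≤ 1) :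
    s ^ w ≤ w * s + (1 - w) := by
  have h := Real.geom_mean_le_arith_mean2_weighted hw0 (by linarith) hs (zero_le_one)
    (by ring : w + (1 - w) = 1)
  simpa using h

set_option maxHeartbeats 1000000 in
theorem quality_increment_key_inequality (p : ℕ) (hp : p.Prime) (hp' : 5 ^ 100 < p)
    (A B : ℝ) (hA : A ∈ Set.Icc (0:ℝ) (5 ^ 12)) (hB : B ∈ Set.Icc (0:ℝ) (5 ^ 12)) :
    (1 - A / p) ^ ((9:ℝ)/10) * (1 - B / p) ^ ((9:ℝ)/10) * (1 - 1 / p) ^ ((1:ℝ)/5)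
      + (A * B) ^ ((9:ℝ)/10) / (p : ℝ) ^ ((9:ℝ)/5)
      + ((1 - A / p) ^ ((9:ℝ)/10) * B ^ ((9:ℝ)/10)
          + A ^ ((9:ℝ)/10) * (1 - B / p) ^ ((9:ℝ)/10)) / p
      ≤ (1 - (p : ℝ) ^ (-(3:ℝ)/2))⁻¹ := by
  obtain ⟨hA0, hA1⟩ := hA
  obtain ⟨hB0, hB1⟩ := hB
  set q : ℝ := (p : ℝ) with hqdef
  have hq5 : (5:ℝ) ^ (100:ℕ) < q := by
    rw [hqdef]
    have h := (Nat.cast_lt (α := ℝ)).mpr hp'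
    push_cast at h
    exact_mod_cast h
  have hq1 : (1:ℝ) < q := lt_trans (by norm_num) hq5
  have hq0 : (0:ℝ) < q := lt_trans one_pos hq1
  have hAq : A ≤ q := le_trans hA1 (le_trans (by norm_num) hq5.le)
  have hBq : B ≤ q := le_trans hB1 (le_trans (by norm_num) hq5.le)
  have hxa : 0 ≤ 1 - A / q := by
    rw [sub_nonneg, div_le_one hq0]; exact hAq
  have hxb : 0 ≤ 1 - B / q := by
    rw [sub_nonneg, div_le_one hq0]; exact hBq
  have hxc : 0 ≤ 1 - 1 / q := by
    rw [sub_nonneg, div_le_one hq0]; exact hq1.le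
  -- linear upper bounds on the rpow quantities
  have h1 : (1 - A / q) ^ ((9:ℝ)/10) ≤ 1 - 9/10 * (A / q) := by
    have := rpow_le_weighted_lin (1 - A / q) (9/10) hxa (by norm_num) (by norm_num)
    linarith
  have h2 : (1 - B / q) ^ ((9:ℝ)/10) ≤ 1 - 9/10 * (B / q) := by
    have := rpow_le_weighted_lin (1 - B / q) (9/10) hxb (by norm_num) (by norm_num)
    linarith
  have h3 : (1 - 1 / q) ^ ((1:ℝ)/5) ≤ 1 - 1/5 * (1 / q) := by
    have := rpow_le_weighted_lin (1 - 1 / q) (1/5) hxc (by norm_num) (by norm_num)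
    linarith
  have h1nn : 0 ≤ (1 - A / q) ^ ((9:ℝ)/10) := Real.rpow_nonneg hxa _
  have h2nn : 0 ≤ (1 - B / q) ^ ((9:ℝ)/10) := Real.rpow_nonneg hxb _
  have h3nn : 0 ≤ (1 - 1 / q) ^ ((1:ℝ)/5) := Real.rpow_nonneg hxc _
  have h1le : (1 - A / q) ^ ((9:ℝ)/10) ≤ 1 :=
    Real.rpow_le_one hxa (by linarith [div_nonneg hA0 hq0.le]) (by norm_num)
  have h2le : (1 - B / q) ^ ((9:ℝ)/10) ≤ 1 :=
    Real.rpow_le_one hxb (by linarith [div_nonneg hB0 hq0.le]) (by norm_num)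
  have h4 : A ^ ((9:ℝ)/10) ≤ 9/10 * A + 1/10 := by
    have := rpow_le_weighted_lin A (9/10) hA0 (by norm_num) (by norm_num)
    linarith
  have h5 : B ^ ((9:ℝ)/10) ≤ 9/10 * B + 1/10 := by
    have := rpow_le_weighted_lin B (9/10) hB0 (by norm_num) (by norm_num)
    linarith
  -- rpow exponent arithmetic for q
  have hsplit : q ^ ((9:ℝ)/5) = q ^ ((3:ℝ)/2) * q ^ ((3:ℝ)/10) := by
    rw [← Real.rpow_add hq0]; norm_num
  have hsplit2 : q ^ ((3:ℝ)/2) * q ^ ((1:ℝ)/2) = q ^ (2:ℕ) := by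
    rw [← Real.rpow_add hq0, ← Real.rpow_natCast q 2]; norm_num
  have hq310 : (5:ℝ) ^ (30:ℕ) ≤ q ^ ((3:ℝ)/10) := by
    have h := Real.rpow_le_rpow (by positivity) hq5.le (by norm_num : (0:ℝ) ≤ 3/10)
    calc (5:ℝ) ^ (30:ℕ) = ((5:ℝ) ^ (100:ℕ)) ^ ((3:ℝ)/10) := by
          rw [pow_rpow_five, five_rpow_eq 30 _ (by norm_num)]
      _ ≤ q ^ ((3:ℝ)/10) := h
  have hq12 : (5:ℝ) ^ (50:ℕ) ≤ q ^ ((1:ℝ)/2) := by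
    have h := Real.rpow_le_rpow (by positivity) hq5.le (by norm_num : (0:ℝ) ≤ 1/2)
    calc (5:ℝ) ^ (50:ℕ) = ((5:ℝ) ^ (100:ℕ)) ^ ((1:ℝ)/2) := by
          rw [pow_rpow_five, five_rpow_eq 50 _ (by norm_num)]
      _ ≤ q ^ ((1:ℝ)/2) := h
  have hq32pos : (0:ℝ) < q ^ ((3:ℝ)/2) := Real.rpow_pos_of_pos hq0 _
  -- abbreviate t = q^{-3/2}
  set t : ℝ := q ^ (-(3:ℝ)/2) with htdef
  have ht : t = (q ^ ((3:ℝ)/2))⁻¹ := by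
    rw [htdef, ← Real.rpow_neg hq0.le]; norm_num
  have ht0 : 0 < t := Real.rpow_pos_of_pos hq0 _
  have ht1 : t < 1 := Real.rpow_lt_one_of_one_lt_of_neg hq1 (by norm_num)
  -- bound the middle term: (A*B)^{9/10} / q^{9/5} ≤ 5^{-8} * t
  have hAB : (A * B) ^ ((9:ℝ)/10) ≤ (5:ℝ) ^ (22:ℕ) := by
    have hABle : A * B ≤ (5:ℝ) ^ (24:ℕ) := by
      calc A * B ≤ (5:ℝ)^12 * (5:ℝ)^12 :=
            mul_le_mul hA1 hB1 hB0 (by positivity)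
        _ = (5:ℝ) ^ (24:ℕ) := by norm_num
    calc (A * B) ^ ((9:ℝ)/10) ≤ ((5:ℝ) ^ (24:ℕ)) ^ ((9:ℝ)/10) :=
          Real.rpow_le_rpow (mul_nonneg hA0 hB0) hABle (by norm_num)
      _ = (5:ℝ) ^ ((24:ℝ) * (9/10)) := by rw [pow_rpow_five]; norm_num
      _ ≤ (5:ℝ) ^ ((22:ℝ)) := Real.rpow_le_rpow_of_exponent_le (by norm_num) (by norm_num)
      _ = (5:ℝ) ^ (22:ℕ) := five_rpow_eq 22 _ (by norm_num)
  have hmid : (A * B) ^ ((9:ℝ)/10) / q ^ ((9:ℝ)/5) ≤ (5:ℝ)^(22:ℕ) / ((5:ℝ)^(30:ℕ)) * t := by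
    rw [ht, hsplit]
    rw [div_le_iff₀ (by positivity)]
    have : (5:ℝ)^(22:ℕ) / ((5:ℝ)^(30:ℕ)) * (q ^ ((3:ℝ)/2))⁻¹ * (q ^ ((3:ℝ)/2) * q ^ ((3:ℝ)/10))
        = (5:ℝ)^(22:ℕ) / ((5:ℝ)^(30:ℕ)) * q ^ ((3:ℝ)/10) := by
      field_simp
    rw [this]
    calc (A * B) ^ ((9:ℝ)/10) ≤ (5:ℝ)^(22:ℕ) := hAB
      _ = (5:ℝ)^(22:ℕ) / ((5:ℝ)^(30:ℕ)) * (5:ℝ)^(30:ℕ) := by field_simp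
      _ ≤ (5:ℝ)^(22:ℕ) / ((5:ℝ)^(30:ℕ)) * q ^ ((3:ℝ)/10) := by
          apply mul_le_mul_of_nonneg_left hq310 (by positivity)
  -- bound 1/q^2 by t / 5^50
  have hq2t : (1:ℝ) / q ^ (2:ℕ) ≤ t / (5:ℝ)^(50:ℕ) := by
    rw [ht, ← hsplit2, div_le_div_iff₀ (by positivity) (by positivity)]
    calc (1:ℝ) * (5:ℝ)^(50:ℕ) = (5:ℝ)^(50:ℕ) := one_mul _
      _ ≤ q ^ ((1:ℝ)/2) := hq12
      _ = (q ^ ((3:ℝ)/2))⁻¹ * (q ^ ((3:ℝ)/2) * q ^ ((1:ℝ)/2)) := by field_simp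
  -- product bound
  have hprod : (1 - A / q) ^ ((9:ℝ)/10) * (1 - B / q) ^ ((9:ℝ)/10) * (1 - 1 / q) ^ ((1:ℝ)/5)
      ≤ (1 - 9/10 * (A / q)) * (1 - 9/10 * (B / q)) * (1 - 1/5 * (1 / q)) := by
    have hb1 : (0:ℝ) ≤ 1 - 9/10 * (A / q) := by
      have := (div_le_one hq0).2 hAq; linarith
    have hb2 : (0:ℝ) ≤ 1 - 9/10 * (B / q) := by
      have := (div_le_one hq0).2 hBq; linarith
    apply mul_le_mul _ h3 h3nn (by positivity)
    exact mul_le_mul h1 h2 h2nn hb1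
  -- last term bound
  have hB9nn : 0 ≤ B ^ ((9:ℝ)/10) := Real.rpow_nonneg hB0 _
  have hA9nn : 0 ≤ A ^ ((9:ℝ)/10) := Real.rpow_nonneg hA0 _
  have hlast : ((1 - A / q) ^ ((9:ℝ)/10) * B ^ ((9:ℝ)/10)
      + A ^ ((9:ℝ)/10) * (1 - B / q) ^ ((9:ℝ)/10)) / q
      ≤ ((9/10 * B + 1/10) + (9/10 * A + 1/10)) / q := by
    gcongr ?x / q
    have e1 : (1 - A / q) ^ ((9:ℝ)/10) * B ^ ((9:ℝ)/10) ≤ 9/10 * B + 1/10 := by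
      calc (1 - A / q) ^ ((9:ℝ)/10) * B ^ ((9:ℝ)/10) ≤ 1 * B ^ ((9:ℝ)/10) :=
            mul_le_mul_of_nonneg_right h1le hB9nn
        _ = B ^ ((9:ℝ)/10) := one_mul _
        _ ≤ 9/10 * B + 1/10 := h5
    have e2 : A ^ ((9:ℝ)/10) * (1 - B / q) ^ ((9:ℝ)/10) ≤ 9/10 * A + 1/10 := by
      calc A ^ ((9:ℝ)/10) * (1 - B / q) ^ ((9:ℝ)/10) ≤ A ^ ((9:ℝ)/10) * 1 :=
            mul_le_mul_of_nonneg_left h2le hA9nn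
        _ = A ^ ((9:ℝ)/10) := mul_one _
        _ ≤ 9/10 * A + 1/10 := h4
    linarith
  -- purely algebraic expansion
  have key : (1 - 9/10 * (A / q)) * (1 - 9/10 * (B / q)) * (1 - 1/5 * (1 / q))
      + ((9/10 * B + 1/10) + (9/10 * A + 1/10)) / q
      ≤ 1 + (81/100 * (A / q * (B / q)) + 18/100 * (A / q * (1 / q))
          + 18/100 * (B / q * (1 / q))) := by
    have hxyw : 0 ≤ (A / q) * (B / q) * (1 / q) := by positivity
    have : ((9/10 * B + 1/10) + (9/10 * A + 1/10)) / q
        = 9/10 * (B / q) + 1/10 * (1 / q) + 9/10 * (A / q) + 1/10 * (1 / q) := by ring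
    rw [this]
    have expand : (1 - 9/10 * (A / q)) * (1 - 9/10 * (B / q)) * (1 - 1/5 * (1 / q))
        + (9/10 * (B / q) + 1/10 * (1 / q) + 9/10 * (A / q) + 1/10 * (1 / q))
        = 1 + (81/100 * (A / q * (B / q)) + 18/100 * (A / q * (1 / q))
            + 18/100 * (B / q * (1 / q))) - 81/500 * ((A / q) * (B / q) * (1 / q)) := by
      ring
    rw [expand]
    linarith [hxyw]
  have hsum : 81/100 * (A / q * (B / q)) + 18/100 * (A / q * (1 / q))
      + 18/100 * (B / q * (1 / q)) ≤ (5:ℝ)^(24:ℕ) * ((1:ℝ) / q ^ (2:ℕ)) := by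
    have e : 81/100 * (A / q * (B / q)) + 18/100 * (A / q * (1 / q))
        + 18/100 * (B / q * (1 / q))
        = (81/100 * (A * B) + 18/100 * A + 18/100 * B) / q ^ (2:ℕ) := by ring
    rw [e]
    rw [div_le_iff₀ (by positivity)]
    have hABle : A * B ≤ (5:ℝ)^(24:ℕ) := by
      calc A * B ≤ (5:ℝ)^12 * (5:ℝ)^12 := mul_le_mul hA1 hB1 hB0 (by positivity)
        _ = (5:ℝ) ^ (24:ℕ) := by norm_num
    have : (5:ℝ)^(24:ℕ) * ((1:ℝ) / q ^ (2:ℕ)) * q ^ (2:ℕ) = (5:ℝ)^(24:ℕ) := by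
      field_simp
    rw [this]
    calc 81/100 * (A * B) + 18/100 * A + 18/100 * B
        ≤ 81/100 * (5:ℝ)^(24:ℕ) + 18/100 * (5:ℝ)^12 + 18/100 * (5:ℝ)^12 := by
          linarith [hABle, hA1, hB1]
      _ ≤ (5:ℝ)^(24:ℕ) := by norm_num
  have hq2t' : (5:ℝ)^(24:ℕ) * ((1:ℝ) / q ^ (2:ℕ)) ≤ (5:ℝ)^(24:ℕ) * (t / (5:ℝ)^(50:ℕ)) :=
    mul_le_mul_of_nonneg_left hq2t (by positivity)
  have h1t : 0 < 1 - t := by linarith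
  have hfin : (1:ℝ) + t ≤ (1 - t)⁻¹ := by
    have hmul : (1 + t) * (1 - t) ≤ 1 := by
      have e : (1 + t) * (1 - t) = 1 - t * t := by ring
      rw [e]; linarith [mul_self_nonneg t]
    calc (1:ℝ) + t = (1 + t) * (1 - t) * (1 - t)⁻¹ := by field_simp
      _ ≤ 1 * (1 - t)⁻¹ := mul_le_mul_of_nonneg_right hmul (by positivity)
      _ = (1 - t)⁻¹ := one_mul _
  have hcoef1 : (5:ℝ)^(22:ℕ) / (5:ℝ)^(30:ℕ) * t ≤ 1/2 * t :=
    mul_le_mul_of_nonneg_right (by norm_num) ht0.le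
  have hcoef2 : (5:ℝ)^(24:ℕ) * (t / (5:ℝ)^(50:ℕ)) ≤ 1/2 * t := by
    have e : (5:ℝ)^(24:ℕ) * (t / (5:ℝ)^(50:ℕ)) = ((5:ℝ)^(24:ℕ) / (5:ℝ)^(50:ℕ)) * t := by ring
    rw [e]
    exact mul_le_mul_of_nonneg_right (by norm_num) ht0.le
  calc (1 - A / q) ^ ((9:ℝ)/10) * (1 - B / q) ^ ((9:ℝ)/10) * (1 - 1 / q) ^ ((1:ℝ)/5)
      + (A * B) ^ ((9:ℝ)/10) / q ^ ((9:ℝ)/5)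
      + ((1 - A / q) ^ ((9:ℝ)/10) * B ^ ((9:ℝ)/10)
          + A ^ ((9:ℝ)/10) * (1 - B / q) ^ ((9:ℝ)/10)) / q
      ≤ (1 - 9/10 * (A / q)) * (1 - 9/10 * (B / q)) * (1 - 1/5 * (1 / q))
        + (5:ℝ)^(22:ℕ) / (5:ℝ)^(30:ℕ) * t
        + ((9/10 * B + 1/10) + (9/10 * A + 1/10)) / q :=
        add_le_add (add_le_add hprod hmid) hlast
    _ ≤ 1 + t := by linarith
    _ ≤ (1 - t)⁻¹ := hfin
end
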